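/- The functions I_n(x) = √π·∫₀^∞ μ^{2n}·e^{−μ²/x}·erf(μ) dμ satisfy the recursion I_{n+1}(x) = ((2n+1)x/2)·I_n(x) + (x·n!/2)·(x/(x+1))^{n+1} for x > 0. -/

import Mathlib

open MeasureTheory Real

/-- The error function. -/
noncomputable def erf (x : ℝ) : ℝ := (2 / Real.sqrt π) * ∫ t in (0:ℝ)..x, Real.exp (-t ^ 2)

/-- The family of integrals `I_n(x) = √π ∫₀^∞ μ^(2n) e^(−μ²/x) erf(μ) dμ`. -/
noncomputable def In (n : ℕ) (x : ℝ) : ℝ :=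
  Real.sqrt π * ∫ μ in Set.Ioi (0:ℝ), μ ^ (2 * n) * Real.exp (-μ ^ 2 / x) * erf μ

/-!
Differentiate `μ ↦ μ^(2n+1) e^(-μ²/x) erf μ` and integrate over `(0, ∞)`, where it vanishes at both
ends. The product rule gives `(2n+1) I_n`, `-(2/x) I_{n+1}`, and, from `erf' μ = (2/√π) e^(-μ²)`,
an odd Gaussian moment `∫ μ^(2n+1) e^(-(1+1/x)μ²) dμ = n! / (2 (1+1/x)^(n+1))`, which is the
inhomogeneous term since `(1+1/x)⁻¹ = x/(x+1)`.
-/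

open Set Filter Topology
open scoped Nat

lemma hasDerivAt_erf (y : ℝ) : HasDerivAt erf (2 / √π * exp (-y ^ 2)) y := by
  have hc : Continuous fun t : ℝ => exp (-t ^ 2) := by fun_prop
  exact (intervalIntegral.integral_hasDerivAt_right (hc.intervalIntegrable 0 y)
    (hc.stronglyMeasurableAtFilter _ _) hc.continuousAt).const_mul _

@[fun_prop]
lemma continuous_erf : Continuous erf :=
  continuous_iff_continuousAt.mpr fun y => (hasDerivAt_erf y).continuousAt

lemma erf_nonneg {y : ℝ} (hy : 0 ≤ y) : 0 ≤ erf y :=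
  mul_nonneg (by positivity) <| intervalIntegral.integral_nonneg hy fun t _ => (exp_pos _).le

lemma erf_le_one {y : ℝ} (hy : 0 ≤ y) : erf y ≤ 1 := by
  have hint : IntegrableOn (fun t : ℝ => exp (-t ^ 2)) (Ioi 0) := by
    simpa using integrableOn_rpow_mul_exp_neg_mul_sq one_pos (s := 0) (by norm_num)
  have hle : ∫ t in (0:ℝ)..y, exp (-t ^ 2) ≤ √π / 2 := by
    calc ∫ t in (0:ℝ)..y, exp (-t ^ 2) ≤ ∫ t in Ioi (0:ℝ), exp (-t ^ 2) := by
          rw [intervalIntegral.integral_of_le hy]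
          exact setIntegral_mono_set hint (.of_forall fun t => (exp_pos _).le)
            Ioc_subset_Ioi_self.eventuallyLE
      _ = √π / 2 := by simpa using integral_gaussian_Ioi 1
  have hπ : 0 < √π := sqrt_pos.mpr pi_pos
  rw [erf, div_mul_eq_mul_div, div_le_one hπ]
  linarith

lemma integrableOn_pow_mul_exp_neg_mul_sq {b : ℝ} (hb : 0 < b) (k : ℕ) :
    IntegrableOn (fun μ : ℝ => μ ^ k * exp (-b * μ ^ 2)) (Ioi 0) := by
  simpa using integrableOn_rpow_mul_exp_neg_mul_sq hb (s := k) (by linarith [k.cast_nonneg (α := ℝ)])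

lemma tendsto_pow_mul_exp_neg_mul_sq_atTop {b : ℝ} (hb : 0 < b) (k : ℕ) :
    Tendsto (fun μ : ℝ => μ ^ k * exp (-b * μ ^ 2)) atTop (𝓝 0) := by
  have h := rpow_mul_exp_neg_mul_sq_isLittleO_exp_neg hb k
  simp_rw [rpow_natCast] at h
  exact h.tendsto_zero_of_tendsto <| tendsto_exp_atBot.comp <|
    tendsto_id.const_mul_atTop_of_neg (by norm_num)

lemma integral_pow_odd_mul_exp_neg_mul_sq {b : ℝ} (hb : 0 < b) (n : ℕ) :
    ∫ μ in Ioi (0:ℝ), μ ^ (2 * n + 1) * exp (-b * μ ^ 2) = n ! / (2 * b ^ (n + 1)) := by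
  have h := integral_rpow_mul_exp_neg_mul_rpow two_pos (q := ((2 * n + 1 : ℕ) : ℝ))
    (by linarith [(2 * n + 1).cast_nonneg (α := ℝ)]) hb
  have hq : (((2 * n + 1 : ℕ) : ℝ) + 1) / 2 = (n : ℝ) + 1 := by push_cast; ring
  have hq' : -(((2 * n + 1 : ℕ) : ℝ) + 1) / 2 = -((n + 1 : ℕ) : ℝ) := by push_cast; ring
  simp only [rpow_natCast, rpow_two] at h
  rw [h, hq, hq', rpow_neg hb.le, rpow_natCast, Gamma_nat_eq_factorial]
  field_simp

lemma integrableOn_pow_mul_exp_neg_mul_sq_mul_erf {b : ℝ} (hb : 0 < b) (k : ℕ) :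
    IntegrableOn (fun μ : ℝ => μ ^ k * exp (-b * μ ^ 2) * erf μ) (Ioi 0) := by
  refine (integrableOn_pow_mul_exp_neg_mul_sq hb k).mono'
    (Continuous.aestronglyMeasurable (by fun_prop)) ?_
  filter_upwards [ae_restrict_mem measurableSet_Ioi] with μ (hμ : 0 < μ)
  rw [norm_mul, norm_of_nonneg (by positivity), norm_of_nonneg (erf_nonneg hμ.le)]
  exact mul_le_of_le_one_right (by positivity) (erf_le_one hμ.le)

lemma tendsto_pow_mul_exp_neg_mul_sq_mul_erf_atTop {b : ℝ} (hb : 0 < b) (k : ℕ) :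
    Tendsto (fun μ : ℝ => μ ^ k * exp (-b * μ ^ 2) * erf μ) atTop (𝓝 0) := by
  refine squeeze_zero' ?_ ?_ (tendsto_pow_mul_exp_neg_mul_sq_atTop hb k)
  · filter_upwards [eventually_ge_atTop 0] with μ hμ
    exact mul_nonneg (by positivity) (erf_nonneg hμ)
  · filter_upwards [eventually_ge_atTop 0] with μ hμ
    exact mul_le_of_le_one_right (by positivity) (erf_le_one hμ)

lemma integral_pow_mul_exp_neg_mul_sq_mul_erf_recurrence {b : ℝ} (hb : 0 < b) (k : ℕ) :
    2 * b * ∫ μ in Ioi (0:ℝ), μ ^ (k + 2) * exp (-b * μ ^ 2) * erf μ =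
      (k + 1) * (∫ μ in Ioi (0:ℝ), μ ^ k * exp (-b * μ ^ 2) * erf μ) +
        2 / √π * ∫ μ in Ioi (0:ℝ), μ ^ (k + 1) * exp (-(1 + b) * μ ^ 2) := by
  have hderiv : ∀ μ ∈ Ioi (0:ℝ), HasDerivAt (fun μ => μ ^ (k + 1) * exp (-b * μ ^ 2) * erf μ)
      ((k + 1) * (μ ^ k * exp (-b * μ ^ 2) * erf μ)
        - 2 * b * (μ ^ (k + 2) * exp (-b * μ ^ 2) * erf μ)
        + 2 / √π * (μ ^ (k + 1) * exp (-(1 + b) * μ ^ 2))) μ := by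
    intro μ _
    have hgauss : HasDerivAt (fun μ : ℝ => -b * μ ^ 2) (-b * (2 * μ)) μ := by
      simpa using (hasDerivAt_pow 2 μ).const_mul (-b)
    refine (((hasDerivAt_pow (k + 1) μ).mul hgauss.exp).mul (hasDerivAt_erf μ)).congr_deriv ?_
    rw [show -(1 + b) * μ ^ 2 = -b * μ ^ 2 + -μ ^ 2 by ring, exp_add]
    simp only [Pi.mul_apply]
    push_cast
    ring
  have i0 := (integrableOn_pow_mul_exp_neg_mul_sq_mul_erf hb k).const_mul (k + 1 : ℝ)
  have i2 := (integrableOn_pow_mul_exp_neg_mul_sq_mul_erf hb (k + 2)).const_mul (2 * b)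
  have i1 := (integrableOn_pow_mul_exp_neg_mul_sq (by linarith : 0 < 1 + b) (k + 1)).const_mul
    (2 / √π)
  have i02 : IntegrableOn (fun μ => (k + 1) * (μ ^ k * exp (-b * μ ^ 2) * erf μ)
      - 2 * b * (μ ^ (k + 2) * exp (-b * μ ^ 2) * erf μ)) (Ioi 0) := i0.sub i2
  have hibp := integral_Ioi_of_hasDerivAt_of_tendsto
    (Continuous.continuousWithinAt (by fun_prop)) hderiv (i02.add i1)
    (tendsto_pow_mul_exp_neg_mul_sq_mul_erf_atTop hb (k + 1))
  rw [integral_add i02 i1, integral_sub i0 i2, integral_const_mul, integral_const_mul,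
    integral_const_mul] at hibp
  simp only [zero_pow k.succ_ne_zero, zero_mul, sub_zero] at hibp
  linarith

lemma In_eq_sqrt_pi_mul_integral (n : ℕ) (x : ℝ) :
    In n x = √π * ∫ μ in Ioi (0:ℝ), μ ^ (2 * n) * exp (-x⁻¹ * μ ^ 2) * erf μ := by
  simp only [In, div_eq_inv_mul, mul_neg, neg_mul]

theorem stmt_15 (n : ℕ) (x : ℝ) (hx : 0 < x) :
    In (n + 1) x = ((2 * n + 1) * x / 2) * In n x +
      (x * (n : ℕ).factorial / 2) * (x / (x + 1)) ^ (n + 1) := by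
  have hrec := integral_pow_mul_exp_neg_mul_sq_mul_erf_recurrence (inv_pos.mpr hx) (2 * n)
  rw [integral_pow_odd_mul_exp_neg_mul_sq (by positivity) n] at hrec
  have hratio : x / (x + 1) = (1 + x⁻¹)⁻¹ := by field_simp
  rw [In_eq_sqrt_pi_mul_integral, In_eq_sqrt_pi_mul_integral, mul_add_one, hratio, inv_pow]
  field_simp at hrec ⊢
  push_cast at hrec ⊢
  linear_combination hrec
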